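/- arXiv:2604.01135 — 6 statements merged into one kernel-verified Lean document; each statement's English description precedes it below -/
import Mathlib

section
/- Let a, b, σ ∈ ℝ with σ ≥ 0, and let λ ∈ ℂ be such that λ + σ² ∉ (−∞, 0]. Then the following are equivalent: (i) there exists a bounded, twice differentiable function v : [0,∞) → ℂ, not identically zero, with v″(x) = (λ+σ²)·v(x) for all x ≥ 0 and λ·v(0) = a·v(0) − b·v′(0); (ii) λ − a − b·√(λ+σ²) = 0, where √ is the principal square root. -/
/-!
Put `μ = √(λ + σ²)`, so `μ² = λ + σ²` and `Re μ > 0` off the branch cut. For a solution `v` of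
`v'' = μ² v`, the combinations `v' ± μ v` solve `w' = ±μ w`, hence equal `w(0) e^{±μx}`. If `v`
is bounded, so is `v' - μ v`, and therefore so is `v' + μ v = (v' - μ v) + 2μ v`; as `e^{μx}`
grows, `v' + μ v` vanishes. Thus `v = v(0) e^{-μx}` with `v(0) ≠ 0`, and the boundary condition
becomes `(λ - a - bμ) v(0) = 0`. Conversely `e^{-μx}` is a bounded solution whenever `λ = a + bμ`.
-/

/-- Principal complex square root: branch cut along `(-∞,0]`, `Re (csqrt z) ≥ 0`. -/
noncomputable def csqrt (z : ℂ) : ℂ := z ^ (1/2 : ℂ)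

open Set Complex Filter

lemma csqrt_sq (z : ℂ) : csqrt z ^ 2 = z := by
  simp [csqrt]

lemma csqrt_re_pos {z : ℂ} (hz : z ∈ slitPlane) : 0 < (csqrt z).re := by
  have hpos : 0 < ‖z‖ + z.re := by
    rcases mem_slitPlane_iff.mp hz with hre | him
    · linarith [norm_nonneg z]
    · linarith [neg_abs_le z.re, abs_re_lt_norm.mpr him]
  rw [csqrt, one_div, cpow_inv_two_re]
  positivity

lemma hasDerivAt_cexp_mul_ofReal (c : ℂ) (x : ℝ) :
    HasDerivAt (fun t : ℝ => exp (c * t)) (c * exp (c * x)) x := by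
  simpa [mul_comm] using ((hasDerivAt_id x).ofReal_comp.const_mul c).cexp

lemma eq_mul_cexp_of_hasDerivWithinAt {c : ℂ} {w : ℝ → ℂ}
    (hw : ∀ x, 0 ≤ x → HasDerivWithinAt w (c * w x) (Ici 0) x) {x : ℝ} (hx : 0 ≤ x) :
    w x = w 0 * exp (c * x) := by
  set g : ℝ → ℂ := fun t => w t * exp (-c * t)
  have hg' : ∀ t ∈ Ico 0 x, HasDerivWithinAt g 0 (Ici t) t := fun t ht => by
    have := ((hw t ht.1).mono (Ici_subset_Ici.mpr ht.1)).mul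
      (hasDerivAt_cexp_mul_ofReal (-c) t).hasDerivWithinAt
    exact this.congr_deriv (by ring)
  have hg : ContinuousOn g (Icc 0 x) :=
    (fun t ht => ((hw t ht.1).continuousWithinAt.mono Icc_subset_Ici_self).mul
      (hasDerivAt_cexp_mul_ofReal (-c) t).continuousAt.continuousWithinAt)
  have hconst : w x * exp (-c * x) = w 0 := by
    simpa [g] using constant_of_has_deriv_right_zero hg hg' x ⟨hx, le_rfl⟩
  rw [← hconst, mul_assoc, ← exp_add]
  simp

lemma eq_zero_of_norm_mul_cexp_le {μ c : ℂ} (hμ : 0 < μ.re) {C : ℝ}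
    (hC : ∀ t : ℝ, 0 ≤ t → ‖c * exp (μ * t)‖ ≤ C) : c = 0 := by
  by_contra hc
  have hgrow : Tendsto (fun t : ℝ => ‖c‖ * Real.exp (μ.re * t)) atTop atTop :=
    (Real.tendsto_exp_atTop.comp (tendsto_id.const_mul_atTop hμ)).const_mul_atTop
      (norm_pos_iff.mpr hc)
  obtain ⟨t, ht, hCt⟩ := ((eventually_ge_atTop 0).and (hgrow.eventually_gt_atTop C)).exists
  have := hC t ht
  rw [norm_mul, norm_exp, re_mul_ofReal] at this
  linarith

lemma deriv_eq_neg_mul_of_bounded {μ : ℂ} (hμ : 0 < μ.re) {v v' : ℝ → ℂ}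
    (hv : ∀ x, 0 ≤ x → HasDerivWithinAt v (v' x) (Ici 0) x)
    (hv' : ∀ x, 0 ≤ x → HasDerivWithinAt v' (μ ^ 2 * v x) (Ici 0) x)
    {C : ℝ} (hC : ∀ x, 0 ≤ x → ‖v x‖ ≤ C) {x : ℝ} (hx : 0 ≤ x) :
    v' x = -μ * v x := by
  set grow : ℝ → ℂ := fun t => v' t + μ * v t
  set decay : ℝ → ℂ := fun t => v' t - μ * v t
  have hgrow : ∀ t, 0 ≤ t → grow t = grow 0 * exp (μ * t) :=
    fun t => eq_mul_cexp_of_hasDerivWithinAt fun s hs =>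
      ((hv' s hs).add ((hv s hs).const_mul μ)).congr_deriv (by simp only [Pi.add_apply]; ring)
  have hdecay : ∀ t, 0 ≤ t → decay t = decay 0 * exp (-μ * t) :=
    fun t => eq_mul_cexp_of_hasDerivWithinAt fun s hs =>
      ((hv' s hs).sub ((hv s hs).const_mul μ)).congr_deriv (by simp only [Pi.sub_apply]; ring)
  have hdecay_le : ∀ t, 0 ≤ t → ‖decay t‖ ≤ ‖decay 0‖ := fun t ht => by
    rw [hdecay t ht, norm_mul, norm_exp, re_mul_ofReal, neg_re]
    exact mul_le_of_le_one_right (norm_nonneg _)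
      (Real.exp_le_one_iff.mpr (by nlinarith))
  have hgrow0 : grow 0 = 0 := eq_zero_of_norm_mul_cexp_le hμ (C := ‖decay 0‖ + 2 * ‖μ‖ * C)
    fun t ht => by
      rw [← hgrow t ht, show grow t = decay t + 2 * μ * v t by simp only [grow, decay]; ring]
      calc ‖decay t + 2 * μ * v t‖ ≤ ‖decay t‖ + 2 * ‖μ‖ * ‖v t‖ := by
            simpa using norm_add_le (decay t) (2 * μ * v t)
        _ ≤ ‖decay 0‖ + 2 * ‖μ‖ * C := by gcongr; exacts [hdecay_le t ht, hC t ht]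
  have : grow x = 0 := by rw [hgrow x hx, hgrow0, zero_mul]
  linear_combination this

theorem stmt_2_general (a b σ : ℝ) (lam : ℂ)
    (hm : (lam + (σ:ℂ)^2).im ≠ 0 ∨ 0 < (lam + (σ:ℂ)^2).re) :
    (∃ v v' : ℝ → ℂ,
      (∀ x : ℝ, 0 ≤ x → HasDerivWithinAt v (v' x) (Set.Ici 0) x) ∧
      (∀ x : ℝ, 0 ≤ x → HasDerivWithinAt v' ((lam + (σ:ℂ)^2) * v x) (Set.Ici 0) x) ∧
      (∃ C : ℝ, ∀ x : ℝ, 0 ≤ x → ‖v x‖ ≤ C) ∧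
      (∃ x : ℝ, 0 ≤ x ∧ v x ≠ 0) ∧
      lam * v 0 = a * v 0 - b * v' 0)
    ↔ lam - a - b * csqrt (lam + (σ:ℂ)^2) = 0 := by
  set μ := csqrt (lam + (σ:ℂ)^2)
  have hμ : 0 < μ.re := csqrt_re_pos (mem_slitPlane_iff.mpr hm.symm)
  rw [← csqrt_sq (lam + (σ:ℂ)^2)]
  constructor
  · rintro ⟨v, v', hv, hv', ⟨C, hC⟩, ⟨x₀, hx₀, hvx₀⟩, hbc⟩
    have hv'_eq := fun x hx => deriv_eq_neg_mul_of_bounded hμ hv hv' hC (x := x) hx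
    have hv0 : v 0 ≠ 0 := fun h => hvx₀ <| by
      rw [eq_mul_cexp_of_hasDerivWithinAt (fun x hx => (hv x hx).congr_deriv (hv'_eq x hx)) hx₀,
        h, zero_mul]
    refine (mul_eq_zero.mp ?_).resolve_right hv0
    linear_combination hbc - b * hv'_eq 0 le_rfl
  · intro hroot
    refine ⟨fun x => exp (-μ * x), fun x => -μ * exp (-μ * x),
      fun x _ => (hasDerivAt_cexp_mul_ofReal (-μ) x).hasDerivWithinAt,
      fun x _ => (((hasDerivAt_cexp_mul_ofReal (-μ) x).const_mul (-μ)).congr_deriv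
        (by ring)).hasDerivWithinAt, ⟨1, fun x hx => ?_⟩, ⟨0, le_rfl, by simp⟩, ?_⟩
    · rw [norm_exp, re_mul_ofReal, neg_re, Real.exp_le_one_iff]
      nlinarith
    · simp only [ofReal_zero, mul_zero, exp_zero, mul_one]
      linear_combination hroot

/-- For `a, b, σ ∈ ℝ`, `σ ≥ 0`, and `λ ∈ ℂ` with `λ + σ² ∉ (-∞,0]`:
there is a bounded, twice differentiable, not identically vanishing `v : [0,∞) → ℂ` with
`v'' = (λ+σ²)v` and `λ·v(0) = a·v(0) − b·v'(0)`  iff  `λ − a − b·√(λ+σ²) = 0`. -/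
theorem stmt_2 (a b σ : ℝ) (hσ : 0 ≤ σ) (lam : ℂ)
    (hm : (lam + (σ:ℂ)^2).im ≠ 0 ∨ 0 < (lam + (σ:ℂ)^2).re) :
    (∃ v v' : ℝ → ℂ,
      (∀ x : ℝ, 0 ≤ x → HasDerivWithinAt v (v' x) (Set.Ici 0) x) ∧
      (∀ x : ℝ, 0 ≤ x → HasDerivWithinAt v' ((lam + (σ:ℂ)^2) * v x) (Set.Ici 0) x) ∧
      (∃ C : ℝ, ∀ x : ℝ, 0 ≤ x → ‖v x‖ ≤ C) ∧
      (∃ x : ℝ, 0 ≤ x ∧ v x ≠ 0) ∧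
      lam * v 0 = a * v 0 - b * v' 0)
    ↔ lam - a - b * csqrt (lam + (σ:ℂ)^2) = 0 :=
  stmt_2_general a b σ lam hm
end

section
/- Let α > 0, σ ≥ 0 and ω > 0 be real. Then the imaginary part of 1 − √(2α)/(2·√(iω + σ²)) is strictly positive (with principal square roots). In particular, the derivative ∂_λ𝕕(λ; 0, σ) = 1 − √(2α)/(2√(λ+σ²)) of the characteristic function is nonzero at λ = iω, so every purely imaginary root iω with ω > 0 of 𝕕(·; 0, σ) is a simple root. -/
/-!
`Im √(iω + σ²) > 0` because the principal root maps the upper half-plane into itself, and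
`z ↦ 1 - c / z` with `c > 0` also maps the upper half-plane into itself.
-/

open Complex

lemma csqrt_im_pos {z : ℂ} (hz : 0 < z.im) : 0 < (csqrt z).im := by
  have hre : z.re < ‖z‖ := (abs_lt.mp (abs_re_lt_norm.mpr hz.ne')).2
  rw [csqrt, one_div, cpow_inv_two_im_eq_sqrt hz.le]
  exact Real.sqrt_pos.mpr (by linarith)

lemma one_sub_ofReal_div_im_pos {c : ℝ} (hc : 0 < c) {w : ℂ} (hw : 0 < w.im) :
    0 < (1 - (c : ℂ) / w).im := by
  have hnorm : 0 < normSq w := normSq_pos.mpr fun h => by simp [h] at hw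
  rw [sub_im, div_im]
  simp only [one_im, ofReal_re, ofReal_im, zero_mul, zero_div, zero_sub, neg_neg]
  positivity

theorem stmt_4_general (α σ : ℝ) (hα : 0 < α) (ω : ℝ) (hω : 0 < ω) :
    0 < (1 - (Real.sqrt (2*α) : ℂ) / (2 * csqrt (Complex.I * ω + (σ:ℂ)^2))).im ∧
    (1 - (Real.sqrt (2*α) : ℂ) / (2 * csqrt (Complex.I * ω + (σ:ℂ)^2))) ≠ 0 := by
  have hz : 0 < (Complex.I * ω + (σ:ℂ)^2).im := by
    simpa [← ofReal_pow] using hω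
  have hw : 0 < (2 * csqrt (Complex.I * ω + (σ:ℂ)^2)).im := by
    simpa using csqrt_im_pos hz
  have him := one_sub_ofReal_div_im_pos (c := Real.sqrt (2*α)) (by positivity) hw
  exact ⟨him, fun h => him.ne' (by rw [h, zero_im])⟩

/-- For real `α > 0`, `σ ≥ 0`, `ω > 0`, the imaginary part of
`1 − √(2α)/(2√(iω+σ²))` is strictly positive; in particular the derivative
`∂_λ𝕕(iω;0,σ) = 1 − √(2α)/(2√(iω+σ²))` is nonzero, so every purely imaginary root
`iω`, `ω > 0`, of `𝕕(·;0,σ)` is simple. -/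
theorem stmt_4 (α σ : ℝ) (hα : 0 < α) (hσ : 0 ≤ σ) (ω : ℝ) (hω : 0 < ω) :
    0 < (1 - (Real.sqrt (2*α) : ℂ) / (2 * csqrt (Complex.I * ω + (σ:ℂ)^2))).im ∧
    (1 - (Real.sqrt (2*α) : ℂ) / (2 * csqrt (Complex.I * ω + (σ:ℂ)^2))) ≠ 0 :=
  stmt_4_general α σ hα ω hω
end

section
/- Let α > 0 and σ ∈ ℝ with 2σ² < α. Suppose γ ∈ ℂ satisfies γ² + α − σ² = √(2α)·γ, and that λ := γ² − σ² is purely imaginary and nonzero (Re λ = 0, λ ≠ 0). Then γ ≠ √(α/2), and Re( γ² / (γ − √(α/2)) ) ≠ 0. -/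
/-- Let `α > 0`, `2σ² < α`, and suppose `γ ∈ ℂ` satisfies
`γ² + α − σ² = √(2α)·γ` and `λ := γ² − σ²` is purely imaginary and nonzero.
Then `γ ≠ √(α/2)` and `Re(γ²/(γ − √(α/2))) ≠ 0`. -/
theorem stmt_5 (α σ : ℝ) (hα : 0 < α) (hσ : 2*σ^2 < α) (γ : ℂ)
    (hγ : γ^2 + α - (σ:ℂ)^2 = Real.sqrt (2*α) * γ)
    (hre : (γ^2 - (σ:ℂ)^2).re = 0) (hne : γ^2 - (σ:ℂ)^2 ≠ 0) :
    γ ≠ (Real.sqrt (α/2) : ℂ) ∧ (γ^2 / (γ - (Real.sqrt (α/2) : ℂ))).re ≠ 0 := by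
  set s : ℝ := Real.sqrt (2*α) with hs
  have hs0 : 0 < s := Real.sqrt_pos.mpr (by linarith)
  have hssq : s * s = 2 * α := Real.mul_self_sqrt (by linarith)
  have hlam : γ^2 - (σ:ℂ)^2 = (s:ℂ) * γ - (α:ℂ) := by
    have := hγ; ring_nf at this ⊢; linear_combination this
  -- real part
  have hre' : s * γ.re - α = 0 := by
    have := hre; rw [hlam] at this; simpa using this
  have him : γ.im ≠ 0 := by
    intro h
    apply hne
    rw [hlam]
    apply Complex.ext
    · simpa using hre'
    · simp [h]
  have hre2 : γ.re = s / 2 := by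
    have : γ.re = α / s := by field_simp at hre' ⊢; linarith
    rw [this]
    field_simp
    linarith [hssq]
  have hc : Real.sqrt (α/2) = s / 2 := by
    rw [hs, show (2:ℝ)*α = 4*(α/2) by ring, show (4:ℝ) = 2^2 by norm_num,
      Real.sqrt_mul (by positivity), Real.sqrt_sq (by norm_num)]
    ring
  have hdiff : γ - (Real.sqrt (α/2) : ℂ) = γ.im * Complex.I := by
    apply Complex.ext <;> simp [hc, hre2]
  constructor
  · intro h
    apply him
    have : γ.im = ((Real.sqrt (α/2) : ℂ)).im := by rw [h]
    simpa using this
  · rw [hdiff]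
    rw [Complex.div_re]
    have h2re : (γ^2).re = γ.re * γ.re - γ.im * γ.im := by
      simp [pow_two, Complex.mul_re]
    have h2im : (γ^2).im = γ.re * γ.im + γ.im * γ.re := by
      simp [pow_two, Complex.mul_im]
    have hnsq : Complex.normSq ((γ.im : ℂ) * Complex.I) = γ.im * γ.im := by
      simp [Complex.normSq_mul]
    rw [h2re, h2im, hnsq]
    simp only [Complex.mul_re, Complex.mul_im, Complex.I_re, Complex.I_im,
      Complex.ofReal_re, Complex.ofReal_im]
    have : (γ.re * γ.re - γ.im * γ.im) * (γ.im * 0 - 0 * 1) / (γ.im * γ.im) +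
        (γ.re * γ.im + γ.im * γ.re) * (γ.im * 1 + 0 * 0) / (γ.im * γ.im)
        = 2 * γ.re := by
      field_simp
      ring
    rw [this, hre2]
    positivity
end

section
/- Let α > 0 and σ ≥ 0 be real with α > 2σ², and set ω* := √(α(α−2σ²)). Then there exist ε > 0 and a differentiable function λ : (−ε, ε) → ℂ such that λ(0) = iω*, such that λ(μ) + α − (μ + √(2α))·√(λ(μ) + σ²) = 0 for all |μ| < ε, and such that Re λ′(0) > 0. -/
/-!
Substituting `w = √(λ + σ²)` turns `𝕕(λ; μ, σ) = 0` into the real quadratic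
`w² - s w + (α - σ²) = 0` with `s = μ + √(2α)`. While its discriminant is negative and
`s > 0`, the root `w(μ)` with positive imaginary part has positive real part, so it is the principal
square root of `λ(μ) := w(μ)² - σ²`; this gives the branch explicitly. One finds
`Re λ(μ) = s²/2 - α`, which vanishes at `μ = 0` and has derivative `s = √(2α) > 0` there.
-/

open Complex

lemma csqrt_sq_s8 {w : ℂ} (hw : 0 < w.re) : csqrt (w ^ 2) = w := by
  rw [csqrt, one_div]
  exact sq_cpow_two_inv hw

/-- The root of `w² - s w + p` with nonnegative imaginary part, when `s² ≤ 4p`. -/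
noncomputable def quadRoot (p s : ℝ) : ℂ := (s + √(4 * p - s ^ 2) * I) / 2

section quadRoot

variable {p s : ℝ}

@[simp]
lemma quadRoot_re : (quadRoot p s).re = s / 2 := by
  simp [quadRoot]

lemma quadRoot_sq (h : s ^ 2 ≤ 4 * p) :
    quadRoot p s ^ 2 = (s ^ 2 / 2 - p : ℝ) + (s * √(4 * p - s ^ 2) / 2 : ℝ) * I := by
  have hr : (√(4 * p - s ^ 2) : ℂ) ^ 2 = 4 * p - s ^ 2 := by
    exact_mod_cast Real.sq_sqrt (sub_nonneg.mpr h)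
  simp only [quadRoot]
  push_cast
  linear_combination ((√(4 * p - s ^ 2) : ℂ) ^ 2 / 4) * I_sq - hr / 4

lemma quadRoot_sq_sub_mul_add (h : s ^ 2 ≤ 4 * p) :
    quadRoot p s ^ 2 - s * quadRoot p s + p = 0 := by
  rw [quadRoot_sq h, quadRoot]
  push_cast
  ring

lemma hasDerivAt_quadRoot (h : s ^ 2 < 4 * p) :
    HasDerivAt (quadRoot p) ((1 - (s / √(4 * p - s ^ 2) : ℝ) * I) / 2) s := by
  have hdisc : HasDerivAt (fun t : ℝ => 4 * p - t ^ 2) (-(2 * s)) s := by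
    simpa using ((hasDerivAt_id s).pow 2).const_sub (4 * p)
  have hroot := (hdisc.sqrt (sub_pos.mpr h).ne').ofReal_comp
  show HasDerivAt (fun t : ℝ => ((t : ℂ) + √(4 * p - t ^ 2) * I) / 2) _ s
  refine (((hasDerivAt_id s).ofReal_comp.add (hroot.mul_const I)).div_const 2).congr_deriv ?_
  push_cast
  ring

lemma hasDerivAt_quadRoot_sq (h : s ^ 2 < 4 * p) :
    HasDerivAt (fun t => quadRoot p t ^ 2)
      (s + ((2 * p - s ^ 2) / √(4 * p - s ^ 2) : ℝ) * I) s := by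
  refine ((hasDerivAt_quadRoot h).pow 2).congr_deriv ?_
  have hr : (√(4 * p - s ^ 2) : ℂ) ≠ 0 := by
    exact_mod_cast (Real.sqrt_pos.mpr (sub_pos.mpr h)).ne'
  have hr2 : (√(4 * p - s ^ 2) : ℂ) ^ 2 = 4 * p - s ^ 2 := by
    exact_mod_cast Real.sq_sqrt (sub_pos.mpr h).le
  unfold quadRoot
  push_cast
  field_simp
  linear_combination (-(s : ℂ) * √(4 * p - s ^ 2)) * I_sq + I * hr2

end quadRoot

theorem stmt_8_general (α σ : ℝ) (hα : 0 < α) (h2 : 2*σ^2 < α) :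
    ∃ ε : ℝ, 0 < ε ∧ ∃ lam : ℝ → ℂ,
      lam 0 = Complex.I * Real.sqrt (α*(α - 2*σ^2)) ∧
      (∀ μ : ℝ, |μ| < ε → DifferentiableAt ℝ lam μ) ∧
      (∀ μ : ℝ, |μ| < ε →
        lam μ + α - (μ + Real.sqrt (2*α)) * csqrt (lam μ + (σ:ℂ)^2) = 0) ∧
      0 < (deriv lam 0).re := by
  set c := √(2 * α)
  set p := α - σ ^ 2 with hp
  have hc : 0 < c := Real.sqrt_pos.mpr (by linarith)
  have hc2 : c ^ 2 = 2 * α := Real.sq_sqrt (by linarith)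
  have hcp : c ^ 2 < 4 * p := by linarith
  obtain ⟨ε, hε, hball⟩ :
      ∃ ε > 0, ∀ μ : ℝ, |μ| < ε → 0 < μ + c ∧ (μ + c) ^ 2 < 4 * p := by
    have hopen : IsOpen {μ : ℝ | 0 < μ + c ∧ (μ + c) ^ 2 < 4 * p} :=
      have hs : Continuous fun μ : ℝ => μ + c := continuous_id.add continuous_const
      (isOpen_lt continuous_const hs).inter (isOpen_lt (hs.pow 2) continuous_const)
    obtain ⟨ε, hε, hsub⟩ := Metric.isOpen_iff.mp hopen 0 (by simp [hc, hcp])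
    exact ⟨ε, hε, fun μ hμ => hsub (by simpa using hμ)⟩
  set lam : ℝ → ℂ := fun μ => quadRoot p (μ + c) ^ 2 - (σ : ℂ) ^ 2
  have hlam : ∀ μ, (μ + c) ^ 2 < 4 * p → HasDerivAt lam
      ((μ + c : ℝ) + ((2 * p - (μ + c) ^ 2) / √(4 * p - (μ + c) ^ 2) : ℝ) * I) μ :=
    fun μ h => ((hasDerivAt_quadRoot_sq h).comp_add_const μ c).sub_const _
  refine ⟨ε, hε, lam, ?_, fun μ hμ => (hlam μ (hball μ hμ).2).differentiableAt, ?_, ?_⟩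
  · have him : √(α * (α - 2 * σ ^ 2)) = c * √(4 * p - c ^ 2) / 2 := by
      rw [Real.sqrt_eq_iff_eq_sq (by nlinarith) (by positivity), div_pow, mul_pow, hc2,
        Real.sq_sqrt (by linarith)]
      ring
    simp only [lam, zero_add, quadRoot_sq hcp.le, him, hc2]
    push_cast [hp]
    ring
  · intro μ hμ
    obtain ⟨hs, hdisc⟩ := hball μ hμ
    have hsqrt : csqrt (lam μ + (σ : ℂ) ^ 2) = quadRoot p (μ + c) := by
      simp only [lam, sub_add_cancel]
      exact csqrt_sq_s8 (by simpa using hs)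
    have hroot := quadRoot_sq_sub_mul_add hdisc.le
    rw [hsqrt]
    push_cast [hp] at hroot ⊢
    linear_combination hroot
  · rw [(hlam 0 (by simpa using hcp)).deriv]
    simpa only [add_re, ofReal_re, re_ofReal_mul, I_re, mul_zero, add_zero, zero_add] using hc

/-- For real `α > 0`, `σ ≥ 0` with `α > 2σ²` and `ω* := √(α(α−2σ²))`,
there is a differentiable branch of roots `λ(μ)` of the characteristic function
`𝕕(λ;μ,σ) = λ + α − (μ+√(2α))√(λ+σ²)` with `λ(0) = iω*` and `Re λ'(0) > 0`. -/
theorem stmt_8 (α σ : ℝ) (hα : 0 < α) (hσ : 0 ≤ σ) (h2 : 2*σ^2 < α) :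
    ∃ ε : ℝ, 0 < ε ∧ ∃ lam : ℝ → ℂ,
      lam 0 = Complex.I * Real.sqrt (α*(α - 2*σ^2)) ∧
      (∀ μ : ℝ, |μ| < ε → DifferentiableAt ℝ lam μ) ∧
      (∀ μ : ℝ, |μ| < ε →
        lam μ + α - (μ + Real.sqrt (2*α)) * csqrt (lam μ + (σ:ℂ)^2) = 0) ∧
      0 < (deriv lam 0).re :=
  stmt_8_general α σ hα h2
end

section
/- Let α > 0 and β, γ ∈ ℝ. With Λ₀ := α, Λ₂ := α(1−√2+(2−√2)i), Λ₁μ := √(iα), Λ₁ω := i·(1 − √(2α)/(2√(iα))), and M := (3/4)γ + β²·(Λ₀⁻¹ + (2Λ₂)⁻¹), one has Im(M·conj(Λ₁ω)) / Im(Λ₁ω·conj(Λ₁μ)) = (1/√α)·( (β²/α)·(1/3 − 1/(2√2)) − (3/(4√2))·γ ). -/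
open Complex ComplexConjugate

lemma csqrt_I_mul_ofReal {a : ℝ} (ha : 0 ≤ a) :
    csqrt (I * a) = (√(a / 2) : ℂ) * (1 + I) := by
  have hnorm : ‖I * (a : ℂ)‖ = a := by simp [abs_of_nonneg ha]
  rw [csqrt, show (1 / 2 : ℂ) = 2⁻¹ by norm_num]
  apply Complex.ext
  · rw [cpow_inv_two_re, hnorm]; simp
  · rw [cpow_inv_two_im_eq_sqrt (by simp [ha]), hnorm]; simp

lemma I_mul_one_sub_sqrt_div_csqrt {a : ℝ} (ha : 0 < a) :
    I * (1 - (√(2 * a) : ℂ) / (2 * csqrt (I * a))) = (-1 + I) / 2 := by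
  have hs : √(2 * a) = 2 * √(a / 2) := by
    rw [show 2 * a = 2 ^ 2 * (a / 2) by ring, Real.sqrt_mul (by positivity), Real.sqrt_sq two_pos.le]
  have hs0 : (√(a / 2) : ℂ) ≠ 0 := ofReal_ne_zero.2 (Real.sqrt_pos.2 (by positivity)).ne'
  have h1I : (1 + I) ≠ 0 := fun h => by simpa using congrArg im h
  rw [csqrt_I_mul_ofReal ha.le, hs]
  push_cast
  field_simp
  linear_combination I_sq

-- `1 - √2 + (2 - √2) i = (1 - √2)(1 - √2 i)`, and `(1 - √2)(1 + √2) = -1`, `(1 - √2 i)(1 + √2 i) = 3`.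
lemma inv_two_mul_ofReal_mul_one_sub_sqrt_two {a : ℝ} (ha : a ≠ 0) :
    (2 * ((a : ℂ) * (1 - √2 + (2 - √2) * I)))⁻¹ = -((1 + √2) * (1 + √2 * I)) / (6 * a) := by
  have ht : ((√2 : ℝ) : ℂ) ^ 2 = 2 := by exact_mod_cast Real.sq_sqrt zero_le_two
  have h6a : (6 * a : ℂ) ≠ 0 := mul_ne_zero (by norm_num) (ofReal_ne_zero.2 ha)
  refine inv_eq_of_mul_eq_one_left ?_
  rw [div_mul_eq_mul_div, div_eq_one_iff_eq h6a]
  linear_combination 2 * (a : ℂ) * (2 + √2 ^ 2 + (1 + √2) * (1 + √2 * I) * I) * ht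
    + 2 * (a : ℂ) * (1 - √2 ^ 2) * √2 ^ 2 * I_sq

lemma im_mul_conj_neg_one_add_I_div_two (z : ℂ) :
    (z * conj ((-1 + I) / 2)).im = -(z.re + z.im) / 2 := by
  simp [mul_im, div_re, div_im]
  ring

lemma im_neg_one_add_I_div_two_mul_conj (s : ℝ) :
    ((-1 + I) / 2 * conj ((s : ℂ) * (1 + I))).im = s := by
  simp [mul_im, mul_re]
  ring

/-- Explicit evaluation of the quadratic coefficient `μ₂` of the
bifurcation parameter expansion, without degradation (`σ = 0`, `ω* = α`). -/
theorem stmt_11 (α β γ : ℝ) (hα : 0 < α) :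
    let Λ₀ : ℂ := (α : ℂ)
    let Λ₂ : ℂ := (α : ℂ) * (1 - Real.sqrt 2 + (2 - Real.sqrt 2) * Complex.I)
    let Λ₁μ : ℂ := csqrt (Complex.I * α)
    let Λ₁ω : ℂ := Complex.I * (1 - (Real.sqrt (2*α) : ℂ) / (2 * csqrt (Complex.I * α)))
    let M : ℂ := (3/4 : ℂ) * γ + (β:ℂ)^2 * (Λ₀⁻¹ + (2*Λ₂)⁻¹)
    (M * (starRingEnd ℂ) Λ₁ω).im / (Λ₁ω * (starRingEnd ℂ) Λ₁μ).im
      = (1/Real.sqrt α) * ((β^2/α) * (1/3 - 1/(2*Real.sqrt 2)) - (3/(4*Real.sqrt 2)) * γ) := by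
  intro Λ₀ Λ₂ Λ₁μ Λ₁ω M
  have hΛ₁μ : Λ₁μ = (√(α / 2) : ℂ) * (1 + I) := csqrt_I_mul_ofReal hα.le
  have hΛ₁ω : Λ₁ω = (-1 + I) / 2 := I_mul_one_sub_sqrt_div_csqrt hα
  have hM : M.re + M.im = 3 / 4 * γ + β ^ 2 / α - β ^ 2 * (1 + √2) ^ 2 / (6 * α) := by
    have hΛ₂ : (2 * Λ₂)⁻¹ = -((1 + √2) * (1 + √2 * I)) / (6 * α) :=
      inv_two_mul_ofReal_mul_one_sub_sqrt_two hα.ne'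
    simp [M, Λ₀, hΛ₂, sq, div_re, div_im]
    field_simp
    ring
  have hsqrt : √α = √2 * √(α / 2) := by
    rw [← Real.sqrt_mul zero_le_two]; ring_nf
  have hs : 0 < √(α / 2) := Real.sqrt_pos.2 (by positivity)
  rw [hΛ₁ω, hΛ₁μ, im_mul_conj_neg_one_add_I_div_two, im_neg_one_add_I_div_two_mul_conj, hM, hsqrt]
  field_simp
  linear_combination (12 * β ^ 2 * (√2 ^ 2 + 2 * √2 - 3) - 54 * γ * α) * Real.sq_sqrt zero_le_two
end

section
/- Let α > 0 and β, γ ∈ ℝ. Define the complex numbers a := −( 3((1+2i) − (1+i)√2)·α·γ + ((6+8i) − (4+4i)√2)·β² ) / ( ((4+8i) − (4+4i)√2)·α ) and b := ((1+i)/2)·α, and define μ₂ := (1/√α)·( (β²/α)·(1/3 − 1/(2√2)) − (3/(4√2))·γ ). Then −2·Re(a·conj(b))/|b|² < 0 if and only if μ₂ > 0, and −2·Re(a·conj(b))/|b|² > 0 if and only if μ₂ < 0. -/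
/-!
Both coefficients in the numerator of `a` are multiples of `w = (1 + 2i) - (1 + i)√2`, and the
denominator is `4wα`, so `a` reduces to `-(z β² / (12α) + 3γ/4)` with `z` explicit. Since
`b = (1 + i)α/2`, the Floquet coefficient is `-2 (Re a + Im a) / α`, which works out to
`-(2√2/√α) μ₂`: a negative multiple of `μ₂`.
-/

open Complex

theorem neg_two_mul_re_mul_conj_one_add_I_div_sq_norm (a : ℂ) {α : ℝ} (hα : α ≠ 0) :
    -2 * (a * (starRingEnd ℂ) ((1 + I) / 2 * α)).re / ‖(1 + I) / 2 * (α : ℂ)‖ ^ 2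
      = -2 * (a.re + a.im) / α := by
  have hconj : (starRingEnd ℂ) ((1 + I) / 2 * α) = (1 - I) / 2 * α := by
    simp [map_ofNat, sub_eq_add_neg]
  have hnorm : ‖(1 + I) / 2 * (α : ℂ)‖ ^ 2 = α ^ 2 / 2 := by
    rw [Complex.sq_norm, Complex.normSq_apply]
    simp only [mul_re, div_ofNat_re, add_re, one_re, I_re, add_zero, one_div, ofReal_re,
      div_ofNat_im, add_im, one_im, I_im, zero_add, ofReal_im, mul_zero, sub_zero, mul_im]
    ring
  rw [hconj, hnorm]
  simp only [mul_re, div_ofNat_re, sub_re, one_re, I_re, sub_zero, one_div, ofReal_re,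
    div_ofNat_im, sub_im, one_im, I_im, zero_sub, ofReal_im, mul_zero, mul_im, zero_add, neg_mul]
  field_simp
  ring

theorem one_add_two_I_sub_one_add_I_mul_sqrt_two_ne_zero :
    (1 + 2 * I) - (1 + I) * (Real.sqrt 2 : ℂ) ≠ 0 := by
  intro h
  have hre : 1 - Real.sqrt 2 = 0 := by simpa using congrArg Complex.re h
  have hsq : Real.sqrt 2 ^ 2 = 2 := Real.sq_sqrt (by norm_num)
  nlinarith

theorem six_add_eight_I_sub_four_add_four_I_mul_sqrt_two :
    (6 + 8 * I) - (4 + 4 * I) * (Real.sqrt 2 : ℂ)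
      = ((10 - 2 * Real.sqrt 2) - (4 + 2 * Real.sqrt 2) * I) / 3
        * ((1 + 2 * I) - (1 + I) * (Real.sqrt 2 : ℂ)) := by
  have hsq : ((Real.sqrt 2 : ℝ) : ℂ) ^ 2 = 2 := by
    rw [← Complex.ofReal_pow, Real.sq_sqrt (by norm_num)]
    norm_num
  linear_combination (-(2 : ℂ) / 3 - 4 / 3 * I - 2 / 3 * I ^ 2) * hsq + (4 / 3 : ℂ) * I_sq

theorem floquet_a_eq (α β γ : ℝ) (hα : α ≠ 0) :
    -((3 * ((1 + 2 * I) - (1 + I) * (Real.sqrt 2 : ℂ)) * α * γ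
        + ((6 + 8 * I) - (4 + 4 * I) * (Real.sqrt 2 : ℂ)) * (β : ℂ) ^ 2)
        / (((4 + 8 * I) - (4 + 4 * I) * (Real.sqrt 2 : ℂ)) * α))
      = -((((10 - 2 * Real.sqrt 2 : ℝ) : ℂ) - ((4 + 2 * Real.sqrt 2 : ℝ) : ℂ) * I)
          * ((β ^ 2 / (12 * α) : ℝ) : ℂ) + (3 * γ / 4 : ℝ)) := by
  have hw := one_add_two_I_sub_one_add_I_mul_sqrt_two_ne_zero
  have hα' : (α : ℂ) ≠ 0 := by exact_mod_cast hα
  rw [six_add_eight_I_sub_four_add_four_I_mul_sqrt_two,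
    show (4 + 8 * I) - (4 + 4 * I) * (Real.sqrt 2 : ℂ)
      = 4 * ((1 + 2 * I) - (1 + I) * (Real.sqrt 2 : ℂ)) by ring]
  push_cast
  field_simp
  ring

theorem re_add_im_sub_mul_I_mul_add (x y c d : ℝ) :
    ((x - y * I) * c + d).re + ((x - y * I) * c + d).im = (x - y) * c + d := by
  simp only [add_re, mul_re, sub_re, ofReal_re, I_re, mul_zero, ofReal_im, I_im, mul_one,
    sub_self, sub_zero, sub_im, mul_im, add_zero, zero_sub, add_im, neg_mul, zero_add]
  ring

theorem floquet_exponent_eq_neg_mul_branching (β γ : ℝ) {α : ℝ} (hα : 0 < α) :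
    -2 * -(((10 - 2 * Real.sqrt 2) - (4 + 2 * Real.sqrt 2)) * (β ^ 2 / (12 * α)) + 3 * γ / 4) / α
      = -(2 * Real.sqrt 2 / Real.sqrt α) * ((1 / Real.sqrt α)
          * ((β ^ 2 / α) * (1 / 3 - 1 / (2 * Real.sqrt 2)) - (3 / (4 * Real.sqrt 2)) * γ)) := by
  have hsqα : Real.sqrt α ^ 2 = α := Real.sq_sqrt hα.le
  field_simp
  rw [hsqα]
  ring

theorem neg_mul_lt_zero_iff_and_pos_iff {c : ℝ} (hc : 0 < c) (y : ℝ) :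
    (-c * y < 0 ↔ 0 < y) ∧ (0 < -c * y ↔ y < 0) := by
  constructor
  · rw [neg_mul, neg_lt_zero, mul_pos_iff_of_pos_left hc]
  · rw [neg_mul_comm, mul_pos_iff_of_pos_left hc, neg_pos]

/-- The sign of the nontrivial Floquet exponent coefficient
`−2Re(a·conj b)/|b|²` is opposite to the sign of the branching coefficient `μ₂`:
supercritical branches (`μ₂ > 0`) are spectrally stable, subcritical ones
(`μ₂ < 0`) unstable. -/
theorem stmt_18 (α β γ : ℝ) (hα : 0 < α) :
    let a : ℂ := -((3*((1 + 2*Complex.I) - (1 + Complex.I)*(Real.sqrt 2 : ℂ)) * α * γ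
        + ((6 + 8*Complex.I) - (4 + 4*Complex.I)*(Real.sqrt 2 : ℂ)) * (β:ℂ)^2)
        / ((((4 + 8*Complex.I) - (4 + 4*Complex.I)*(Real.sqrt 2 : ℂ))) * α))
    let b : ℂ := ((1 + Complex.I)/2) * α
    let μ₂ : ℝ := (1/Real.sqrt α) * ((β^2/α) * (1/3 - 1/(2*Real.sqrt 2))
      - (3/(4*Real.sqrt 2)) * γ)
    (-2 * (a * (starRingEnd ℂ) b).re / ‖b‖ ^ 2 < 0 ↔ 0 < μ₂) ∧
    (0 < -2 * (a * (starRingEnd ℂ) b).re / ‖b‖ ^ 2 ↔ μ₂ < 0) := by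
  dsimp only
  rw [neg_two_mul_re_mul_conj_one_add_I_div_sq_norm _ hα.ne', floquet_a_eq α β γ hα.ne',
    Complex.neg_re, Complex.neg_im, ← neg_add, re_add_im_sub_mul_I_mul_add,
    floquet_exponent_eq_neg_mul_branching β γ hα]
  exact neg_mul_lt_zero_iff_and_pos_iff (by positivity) _
end
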